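/- For a quasi-graded poset (P,ρ,ζ̄) with 0̂ and 1̂ and μ̄ = ζ̄^{-1}, the ab-index satisfies the dual recursion Ψ([x,z]) = −μ̄(x,z)·(a−b)^{ρ(x,z)−1} − ∑_{x<y<z} Ψ([x,y])·a·μ̄(y,z)·(a−b)^{ρ(y,z)−1}, for all x < z. -/

import Mathlib

open scoped Classical
open Finset

noncomputable section

/-- The free noncommutative algebra `ℚ⟨a,b⟩`. -/
abbrev QA : Type := FreeAlgebra ℚ Bool

/-- The variable `a`. -/
def av : QA := FreeAlgebra.ι ℚ true

/-- The variable `b`. -/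
def bv : QA := FreeAlgebra.ι ℚ false

/-- `c = a + b`. -/
def cvar : QA := av + bv

/-- `d = ab + ba`. -/
def dvar : QA := av * bv + bv * av

variable {α : Type*}

/-- The `ζ̄`-weight of a chain encoded as `f : Fin (k+1) → α`:
the product of the values of `ζ̄` on consecutive elements. -/
def chainZeta (ζ : α → α → ℚ) {k : ℕ} (f : Fin (k + 1) → α) : ℚ :=
  (List.ofFn (fun i : Fin k => ζ (f i.castSucc) (f i.succ))).prod

/-- The `ab`-weight of a chain: `(a-b)^{g₁-1} · b · (a-b)^{g₂-1} · b ⋯ b · (a-b)^{g_k-1}`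
where `gᵢ` are the successive rank gaps along the chain. -/
def chainWt (ρ : α → ℕ) {k : ℕ} (f : Fin (k + 1) → α) : QA :=
  (List.ofFn (fun i : Fin k =>
    (if (i : ℕ) = 0 then 1 else bv) *
      (av - bv) ^ (ρ (f i.succ) - ρ (f i.castSucc) - 1))).prod

/-- `f` encodes a (strict) chain from `x` to `z`. -/
def IsChainFrom [PartialOrder α] {k : ℕ} (f : Fin (k + 1) → α) (x z : α) : Prop :=
  StrictMono f ∧ f 0 = x ∧ f (Fin.last k) = z

/-- The ab-index `Ψ` of the interval `[x,z]` of a quasi-graded poset: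
the sum over all chains from `x` to `z` of `ζ̄(c) · wt(c)`. -/
def abIndex [PartialOrder α] [Fintype α] (ρ : α → ℕ) (ζ : α → α → ℚ) (x z : α) : QA :=
  ∑ k ∈ Finset.range (Fintype.card α), ∑ f : Fin (k + 1) → α,
    if IsChainFrom f x z then chainZeta ζ f • chainWt ρ f else 0

/-- `(P,ρ,ζ̄)` is a quasi-graded poset: `ρ` is strictly order-preserving and `ζ̄`
is an element of the incidence algebra with `ζ̄(x,x) = 1`. -/
def IsQuasiGraded [PartialOrder α] (ρ : α → ℕ) (ζ : α → α → ℚ) : Prop :=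
  StrictMono ρ ∧ (∀ x, ζ x x = 1) ∧ ∀ x y : α, ¬ x ≤ y → ζ x y = 0

/-- Convolution in the incidence algebra. -/
def iaMul [PartialOrder α] [Fintype α] (f g : α → α → ℚ) : α → α → ℚ :=
  fun x z => ∑ y ∈ Finset.univ.filter (fun y => x ≤ y ∧ y ≤ z), f x y * g y z

/-- The identity `δ` of the incidence algebra. -/
def iaDelta : α → α → ℚ := fun x z => if x = z then 1 else 0

/-- The Eulerian condition on the interval `[x,z]`:
`∑_{x ≤ y ≤ z} (-1)^{ρ(y)-ρ(x)} ζ̄(x,y) ζ̄(y,z) = δ_{x,z}`. -/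
def EulerianAt [PartialOrder α] [Fintype α] (ρ : α → ℕ) (ζ : α → α → ℚ) (x z : α) : Prop :=
  (∑ y ∈ Finset.univ.filter (fun y => x ≤ y ∧ y ≤ z),
    (-1 : ℚ) ^ (ρ y - ρ x) * ζ x y * ζ y z) = iaDelta x z

/-- `(P,ρ,ζ̄)` is Eulerian. -/
def IsEulerian [PartialOrder α] [Fintype α] (ρ : α → ℕ) (ζ : α → α → ℚ) : Prop :=
  ∀ x z : α, x ≤ z → EulerianAt ρ ζ x z

/-- The flag `f̄`-vector: `f̄_S = ∑_c ζ̄(c)` over chains from `x` to `z`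
whose interior elements have ranks exactly `S`. -/
def flagF [PartialOrder α] [Fintype α] (ρ : α → ℕ) (ζ : α → α → ℚ)
    (x z : α) (S : Finset ℕ) : ℚ :=
  ∑ k ∈ Finset.range (Fintype.card α), ∑ f : Fin (k + 1) → α,
    if IsChainFrom f x z ∧
        (Finset.univ.filter (fun i : Fin (k + 1) => i ≠ 0 ∧ i ≠ Fin.last k)).image
          (fun i => ρ (f i)) = S
      then chainZeta ζ f else 0

/-- The flag `h̄`-vector: `h̄_S = ∑_{T ⊆ S} (-1)^{|S-T|} f̄_T`. -/
def flagH [PartialOrder α] [Fintype α] (ρ : α → ℕ) (ζ : α → α → ℚ)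
    (x z : α) (S : Finset ℕ) : ℚ :=
  ∑ T ∈ S.powerset, (-1 : ℚ) ^ (S.card - T.card) * flagF ρ ζ x z T

/-- Chains with respect to an explicit strict relation `lt`. -/
def IsChainFromRel (lt : α → α → Prop) {k : ℕ} (f : Fin (k + 1) → α) (x z : α) : Prop :=
  (∀ i j : Fin (k + 1), i < j → lt (f i) (f j)) ∧ f 0 = x ∧ f (Fin.last k) = z

/-- The ab-index with respect to an explicit strict order relation `lt`. -/
def abIndexRel [Fintype α] (lt : α → α → Prop) (ρ : α → ℕ) (ζ : α → α → ℚ)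
    (x z : α) : QA :=
  ∑ k ∈ Finset.range (Fintype.card α), ∑ f : Fin (k + 1) → α,
    if IsChainFromRel lt f x z then chainZeta ζ f • chainWt ρ f else 0

/-- The Eulerian condition with respect to an explicit order relation `le`. -/
def IsEulerianRel [Fintype α] (le : α → α → Prop) (ρ : α → ℕ) (ζ : α → α → ℚ) : Prop :=
  ∀ x z : α, le x z →
    (∑ y ∈ Finset.univ.filter (fun y => le x y ∧ le y z),
      (-1 : ℚ) ^ (ρ y - ρ x) * ζ x y * ζ y z) = (if x = z then (1 : ℚ) else 0)

/-- Carrier of the zipped poset: remove `x` and `y`; the element `z` plays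
the role of the new element `w`. -/
abbrev ZipCarrier (α : Type*) (x y : α) : Type _ := {u : α // u ≠ x ∧ u ≠ y}

/-- The strict order of the zipped poset: `u <_Q w` iff `u < x` or `u < y`,
`w <_Q v` iff `x < v`, and otherwise the order is inherited from `P`. -/
def zipLt [PartialOrder α] (x y z : α) : ZipCarrier α x y → ZipCarrier α x y → Prop :=
  fun u v =>
    if u.1 = z then v.1 ≠ z ∧ x < v.1
    else if v.1 = z then u.1 < x ∨ u.1 < y
    else u.1 < v.1

/-- The (non-strict) order of the zipped poset. -/
def zipLe [PartialOrder α] (x y z : α) : ZipCarrier α x y → ZipCarrier α x y → Prop :=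
  fun u v => zipLt x y z u v ∨ u = v

/-- The rank function of the zipped poset: `ρ_Q(w) = ρ(x)`, otherwise inherited. -/
def zipRank [PartialOrder α] (ρ : α → ℕ) (x y z : α) : ZipCarrier α x y → ℕ :=
  fun u => if u.1 = z then ρ x else ρ u.1

/-- The weighted zeta function of the zipped poset:
`ζ̄_Q(w,v) = ζ̄(x,v)`, `ζ̄_Q(u,w) = ζ̄(u,x) + ζ̄(u,y) - ζ̄(u,z)`, otherwise inherited. -/
def zipZeta [PartialOrder α] (ζ : α → α → ℚ) (x y z : α) :
    ZipCarrier α x y → ZipCarrier α x y → ℚ :=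
  fun u v =>
    if v.1 = z then (if u.1 = z then 1 else ζ u.1 x + ζ u.1 y - ζ u.1 z)
    else if u.1 = z then ζ x v.1
    else ζ u.1 v.1


/-!
Multiply both sides by `a - b` on the right; this is harmless because `ℚ⟨a,b⟩` has no zero
divisors. Fix `x` and put `Q y = Ψ([x,y])·b`, `R y = Ψ([x,y])·a` for `y ≠ x`, and `Q x = R x = 1`.
Removing the top element of each chain gives the primal recursion, which after multiplication by
`a - b` says `R = Q · F` in the incidence algebra over `ℚ⟨a,b⟩`, where
`F(y,z) = ζ̄(y,z)(a-b)^{ρ(z)-ρ(y)}`. Twisting by `(a-b)^{ρ(z)-ρ(y)}` is multiplicative, so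
`G(y,z) = μ̄(y,z)(a-b)^{ρ(z)-ρ(y)}` is a right inverse of `F`, and `Q = R · G` is the dual recursion
multiplied by `a - b`.
-/
theorem Fin.strictMono_snoc_iff {β : Type*} [Preorder β] {k : ℕ} {g : Fin (k + 1) → β} {w : β} :
    StrictMono (Fin.snoc g w : Fin (k + 2) → β) ↔ StrictMono g ∧ g (Fin.last k) < w := by
  rw [Fin.strictMono_iff_lt_succ, Fin.strictMono_iff_lt_succ, Fin.forall_fin_succ']
  simp only [Fin.succ_castSucc, Fin.snoc_castSucc, Fin.succ_last, Fin.snoc_last]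

theorem List.prod_ofFn_snoc_consecutive {β M : Type*} [Monoid M] {k : ℕ} (F : ℕ → β → β → M)
    (g : Fin (k + 1) → β) (w : β) :
    (List.ofFn fun i : Fin (k + 1) =>
        F i ((Fin.snoc g w : Fin (k + 2) → β) i.castSucc)
          ((Fin.snoc g w : Fin (k + 2) → β) i.succ)).prod =
      (List.ofFn fun i : Fin k => F i (g i.castSucc) (g i.succ)).prod * F k (g (Fin.last k)) w := by
  rw [List.ofFn_succ', List.prod_concat]
  simp only [Fin.succ_castSucc, Fin.snoc_castSucc, Fin.succ_last, Fin.snoc_last, Fin.val_castSucc,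
    Fin.val_last]

theorem Fintype.sum_fun_fin_succ_eq_sum_snoc {β M : Type*} [Fintype β] [AddCommMonoid M] {k : ℕ}
    (F : (Fin (k + 2) → β) → M) :
    ∑ f, F f = ∑ g : Fin (k + 1) → β, ∑ w, F (Fin.snoc g w) := by
  rw [← (Fin.snocEquiv fun _ => β).sum_comp, Fintype.sum_prod_type, Finset.sum_comm]
  rfl

theorem chainZeta_snoc (ζ : α → α → ℚ) {k : ℕ} (g : Fin (k + 1) → α) (w : α) :
    chainZeta ζ (Fin.snoc g w : Fin (k + 2) → α) = chainZeta ζ g * ζ (g (Fin.last k)) w :=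
  List.prod_ofFn_snoc_consecutive (fun _ => ζ) g w

theorem chainWt_snoc (ρ : α → ℕ) {k : ℕ} (g : Fin (k + 1) → α) (w : α) :
    chainWt ρ (Fin.snoc g w : Fin (k + 2) → α) =
      chainWt ρ g * ((if k = 0 then 1 else bv) * (av - bv) ^ (ρ w - ρ (g (Fin.last k)) - 1)) :=
  List.prod_ofFn_snoc_consecutive
    (fun i u v => (if i = 0 then 1 else bv) * (av - bv) ^ (ρ v - ρ u - 1)) g w

section Chains

variable [PartialOrder α]

theorem IsChainFrom.le {k : ℕ} {f : Fin (k + 1) → α} {x z : α} (h : IsChainFrom f x z) :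
    x ≤ z :=
  h.2.1 ▸ h.2.2 ▸ h.1.monotone (Fin.zero_le _)

theorem IsChainFrom.length_eq_zero_iff {k : ℕ} {f : Fin (k + 1) → α} {x z : α}
    (h : IsChainFrom f x z) : k = 0 ↔ x = z := by
  obtain ⟨hf, rfl, rfl⟩ := h
  rw [hf.injective.eq_iff, Fin.ext_iff, Fin.val_last, Fin.val_zero, eq_comm]

theorem isChainFrom_snoc_iff {k : ℕ} {g : Fin (k + 1) → α} {w x z : α} :
    IsChainFrom (Fin.snoc g w : Fin (k + 2) → α) x z ↔
      IsChainFrom g x (g (Fin.last k)) ∧ g (Fin.last k) < z ∧ w = z := by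
  have h0 : (Fin.snoc g w : Fin (k + 2) → α) 0 = g 0 := Fin.snoc_castSucc (i := 0) ..
  simp only [IsChainFrom, Fin.strictMono_snoc_iff, h0, Fin.snoc_last, and_true]
  constructor
  · rintro ⟨⟨hg, hlt⟩, rfl, rfl⟩
    exact ⟨⟨hg, rfl⟩, hlt, rfl⟩
  · rintro ⟨⟨hg, rfl⟩, hlt, rfl⟩
    exact ⟨⟨hg, hlt⟩, rfl, rfl⟩

end Chains

section Intervals

variable [PartialOrder α] [Fintype α]

theorem filter_le_and_le_self (u : α) : univ.filter (fun y => u ≤ y ∧ y ≤ u) = {u} := by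
  ext y
  simp [le_antisymm_iff, and_comm]

theorem filter_le_and_le_eq_insert {u w : α} (h : u ≤ w) :
    univ.filter (fun y => u ≤ y ∧ y ≤ w) = insert w (univ.filter fun y => u ≤ y ∧ y < w) := by
  ext y
  simp only [mem_filter, mem_univ, true_and, mem_insert, le_iff_eq_or_lt (b := w)]
  grind

theorem filter_le_and_lt_eq_insert {u w : α} (h : u < w) :
    univ.filter (fun y => u ≤ y ∧ y < w) = insert u (univ.filter fun y => u < y ∧ y < w) := by
  ext y
  simp only [mem_filter, mem_univ, true_and, mem_insert, le_iff_eq_or_lt (a := u)]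
  grind

end Intervals

section IncidenceAlgebra

variable [PartialOrder α] [Fintype α]

theorem sum_mul_eq_of_eq_sum_mul {A : Type*} [Semiring A] {F G : α → α → A}
    (hFG : ∀ u w, u ≤ w →
      ∑ y ∈ univ.filter (fun y => u ≤ y ∧ y ≤ w), F u y * G y w = if u = w then 1 else 0)
    {Q R : α → A} {x : α}
    (hR : ∀ w, x ≤ w → R w = ∑ y ∈ univ.filter (fun y => x ≤ y ∧ y ≤ w), Q y * F y w)
    {z : α} (hz : x ≤ z) :
    ∑ y ∈ univ.filter (fun y => x ≤ y ∧ y ≤ z), R y * G y z = Q z := calc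
  _ = ∑ y ∈ univ.filter (fun y => x ≤ y ∧ y ≤ z),
        ∑ u ∈ univ.filter (fun u => x ≤ u ∧ u ≤ y), Q u * F u y * G y z :=
    Finset.sum_congr rfl fun y hy => by rw [hR y (mem_filter.mp hy).2.1, Finset.sum_mul]
  _ = ∑ u ∈ univ.filter (fun u => x ≤ u ∧ u ≤ z),
        ∑ y ∈ univ.filter (fun y => u ≤ y ∧ y ≤ z), Q u * (F u y * G y z) := by
    refine Finset.sum_comm' (fun y u => ?_) |>.trans
      (Finset.sum_congr rfl fun _ _ => Finset.sum_congr rfl fun _ _ => mul_assoc ..)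
    simp only [mem_filter, mem_univ, true_and]
    constructor
    · rintro ⟨⟨-, hyz⟩, hxu, huy⟩
      exact ⟨⟨huy, hyz⟩, hxu, huy.trans hyz⟩
    · rintro ⟨⟨huy, hyz⟩, hxu, -⟩
      exact ⟨⟨hxu.trans huy, hyz⟩, hxu, huy⟩
  _ = Q z := by
    simp_rw [← Finset.mul_sum]
    rw [Finset.sum_congr rfl fun u hu => by rw [hFG u z (mem_filter.mp hu).2.2]]
    simp [hz]

def rankTwist {A : Type*} [Semiring A] [Algebra ℚ A] (t : A) (ρ : α → ℕ) (f : α → α → ℚ)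
    (u w : α) : A :=
  f u w • t ^ (ρ w - ρ u)

theorem sum_rankTwist_mul_rankTwist {A : Type*} [Semiring A] [Algebra ℚ A] (t : A)
    {ρ : α → ℕ} (hρ : Monotone ρ) (f g : α → α → ℚ) (u w : α) :
    ∑ y ∈ univ.filter (fun y => u ≤ y ∧ y ≤ w), rankTwist t ρ f u y * rankTwist t ρ g y w =
      iaMul f g u w • t ^ (ρ w - ρ u) := by
  rw [iaMul, Finset.sum_smul]
  refine Finset.sum_congr rfl fun y hy => ?_
  obtain ⟨huy, hyw⟩ := (mem_filter.mp hy).2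
  rw [rankTwist, rankTwist, smul_mul_smul_comm, ← pow_add]
  congr 2
  have := hρ huy
  have := hρ hyw
  omega

end IncidenceAlgebra

section AbIndex

variable [PartialOrder α] [Fintype α] (ρ : α → ℕ) (ζ : α → α → ℚ)

def abIndexOfLength (x z : α) (k : ℕ) : QA :=
  ∑ f : Fin (k + 1) → α, if IsChainFrom f x z then chainZeta ζ f • chainWt ρ f else 0

theorem abIndexOfLength_eq_zero_of_card_le {x z : α} {k : ℕ} (hk : Fintype.card α ≤ k) :
    abIndexOfLength ρ ζ x z k = 0 :=
  Finset.sum_eq_zero fun f _ => if_neg fun hf => by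
    simpa using (Fintype.card_le_of_injective f hf.1.injective).trans hk

theorem abIndex_eq_sum_range {x z : α} {n : ℕ} (hn : Fintype.card α ≤ n) :
    abIndex ρ ζ x z = ∑ k ∈ range n, abIndexOfLength ρ ζ x z k :=
  Finset.sum_subset (Finset.range_subset_range.mpr hn) fun k hk hk' =>
    abIndexOfLength_eq_zero_of_card_le ρ ζ (by simpa using hk')

theorem abIndexOfLength_zero (x z : α) :
    abIndexOfLength ρ ζ x z 0 = if x = z then 1 else 0 := by
  rw [abIndexOfLength, ← (Equiv.funUnique (Fin 1) α).symm.sum_comp, Fintype.sum_eq_single x]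
  · by_cases hxz : x = z <;> simp [IsChainFrom, hxz, chainZeta, chainWt, Subsingleton.strictMono]
  · intro y hy
    simp [IsChainFrom, hy]

theorem abIndexOfLength_succ_self (x : α) (k : ℕ) : abIndexOfLength ρ ζ x x (k + 1) = 0 :=
  Finset.sum_eq_zero fun _ _ => if_neg fun hf => k.succ_ne_zero (hf.length_eq_zero_iff.mpr rfl)

theorem abIndex_self (x : α) : abIndex ρ ζ x x = 1 := by
  rw [abIndex_eq_sum_range ρ ζ (Nat.le_succ _), Finset.sum_range_succ', abIndexOfLength_zero,
    if_pos rfl, Finset.sum_eq_zero fun k _ => abIndexOfLength_succ_self ρ ζ x k, zero_add]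

theorem abIndex_eq_zero_of_not_le {x z : α} (h : ¬ x ≤ z) : abIndex ρ ζ x z = 0 :=
  Finset.sum_eq_zero fun _ _ => Finset.sum_eq_zero fun _ _ => if_neg fun hf => h hf.le

theorem abIndexOfLength_succ (x z : α) (k : ℕ) :
    abIndexOfLength ρ ζ x z (k + 1) =
      ∑ y ∈ univ.filter (· < z), abIndexOfLength ρ ζ x y k *
        ((if k = 0 then 1 else bv) * (ζ y z • (av - bv) ^ (ρ z - ρ y - 1))) := by
  simp only [abIndexOfLength, Finset.sum_mul, ite_zero_mul]
  rw [Fintype.sum_fun_fin_succ_eq_sum_snoc, Finset.sum_comm (s := univ.filter _)]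
  refine Finset.sum_congr rfl fun g _ => ?_
  simp only [Finset.sum_filter, ← ite_and]
  rw [Fintype.sum_eq_single z fun w hw => if_neg fun h => hw (isChainFrom_snoc_iff.mp h).2.2,
    Fintype.sum_eq_single (g (Fin.last k)) fun y hy => if_neg fun h => hy h.2.2.2.symm]
  simp only [isChainFrom_snoc_iff, and_true]
  by_cases h : IsChainFrom g x (g (Fin.last k)) ∧ g (Fin.last k) < z
  · rw [if_pos h, if_pos h.symm, chainZeta_snoc, chainWt_snoc]
    simp only [smul_mul_assoc, mul_smul_comm, smul_smul, mul_comm]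
  · rw [if_neg h, if_neg (h ∘ And.symm)]

end AbIndex

section AbIndexRecursion

variable [PartialOrder α] [Fintype α] (ρ : α → ℕ) (ζ : α → α → ℚ)

theorem abIndexOfLength_mul_ite (x y : α) (k : ℕ) :
    abIndexOfLength ρ ζ x y k * (if k = 0 then 1 else bv) =
      abIndexOfLength ρ ζ x y k * (if y = x then 1 else bv) := by
  rcases k with _ | k
  · by_cases h : y = x <;> simp [abIndexOfLength_zero, h, Ne.symm]
  · by_cases h : y = x
    · rw [h, abIndexOfLength_succ_self, zero_mul, zero_mul]
    · simp [h]

theorem abIndex_eq_sum {x z : α} (hxz : x ≠ z) :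
    abIndex ρ ζ x z =
      ∑ y ∈ univ.filter (fun y => x ≤ y ∧ y < z),
        abIndex ρ ζ x y * (if y = x then 1 else bv) * (ζ y z • (av - bv) ^ (ρ z - ρ y - 1)) := by
  rw [Finset.sum_subset (s₂ := univ.filter (· < z)) (fun y hy => by simp_all) fun y _ hxy => by
      rw [abIndex_eq_zero_of_not_le ρ ζ (by simp_all), zero_mul, zero_mul],
    abIndex_eq_sum_range ρ ζ (Nat.le_succ _), Finset.sum_range_succ', abIndexOfLength_zero,
    if_neg hxz, add_zero]
  simp only [abIndexOfLength_succ, ← mul_assoc, abIndexOfLength_mul_ite]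
  rw [Finset.sum_comm]
  refine Finset.sum_congr rfl fun y _ => ?_
  rw [abIndex_eq_sum_range ρ ζ le_rfl, Finset.sum_mul, Finset.sum_mul]

theorem abIndex_mul_ite_av_eq_sum (hρ : StrictMono ρ) (hζ : ∀ y, ζ y y = 1) {x z : α}
    (hxz : x ≤ z) :
    abIndex ρ ζ x z * (if z = x then 1 else av) =
      ∑ y ∈ univ.filter (fun y => x ≤ y ∧ y ≤ z),
        abIndex ρ ζ x y * (if y = x then 1 else bv) * rankTwist (av - bv) ρ ζ y z := by
  rcases hxz.eq_or_lt with rfl | hlt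
  · simp [filter_le_and_le_self, abIndex_self, rankTwist, hζ]
  have hprimal : abIndex ρ ζ x z * (av - bv) =
      ∑ y ∈ univ.filter (fun y => x ≤ y ∧ y < z),
        abIndex ρ ζ x y * (if y = x then 1 else bv) * rankTwist (av - bv) ρ ζ y z := by
    conv_lhs => rw [abIndex_eq_sum ρ ζ hlt.ne]
    rw [Finset.sum_mul]
    refine Finset.sum_congr rfl fun y hy => ?_
    have hρyz := hρ (mem_filter.mp hy).2.2
    rw [mul_assoc, smul_mul_assoc, pow_sub_one_mul (by omega), rankTwist]
  rw [filter_le_and_le_eq_insert hxz, Finset.sum_insert (by simp), ← hprimal, if_neg hlt.ne',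
    if_neg hlt.ne', rankTwist, hζ, Nat.sub_self, pow_zero, one_smul, mul_one, ← mul_add,
    add_sub_cancel]

theorem abIndex_mul_av_sub_bv_eq {m : α → α → ℚ} (hρ : StrictMono ρ)
    (hζ : ∀ y, ζ y y = 1) (hm : iaMul ζ m = iaDelta) {x z : α} (hxz : x < z) :
    abIndex ρ ζ x z * (av - bv) =
      -rankTwist (av - bv) ρ m x z
        - ∑ y ∈ univ.filter (fun y => x < y ∧ y < z),
            abIndex ρ ζ x y * av * rankTwist (av - bv) ρ m y z := by
  have hinv (u w : α) (_ : u ≤ w) :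
      ∑ y ∈ univ.filter (fun y => u ≤ y ∧ y ≤ w),
        rankTwist (av - bv) ρ ζ u y * rankTwist (av - bv) ρ m y w = if u = w then 1 else 0 := by
    rw [sum_rankTwist_mul_rankTwist _ hρ.monotone, hm, iaDelta]
    split_ifs <;> simp [*]
  have hmzz : m z z = 1 := by
    simpa [iaMul, iaDelta, filter_le_and_le_self, hζ] using congrFun₂ hm z z
  have key := sum_mul_eq_of_eq_sum_mul hinv
    (fun w hw => abIndex_mul_ite_av_eq_sum ρ ζ hρ hζ hw) hxz.le
  rw [filter_le_and_le_eq_insert hxz.le, Finset.sum_insert (by simp),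
    filter_le_and_lt_eq_insert hxz, Finset.sum_insert (by simp),
    Finset.sum_congr rfl fun y hy => by rw [if_neg (mem_filter.mp hy).2.1.ne']] at key
  simp only [rankTwist, if_neg hxz.ne', ↓reduceIte, abIndex_self, hmzz, Nat.sub_self, pow_zero,
    one_smul, mul_one, one_mul] at key
  rw [rankTwist, mul_sub, ← key]
  abel

end AbIndexRecursion

theorem av_sub_bv_ne_zero : av - bv ≠ 0 :=
  sub_ne_zero.mpr fun h => Bool.noConfusion (FreeAlgebra.ι_injective (R := ℚ) h)

theorem abIndex_dual_recursion_general {α : Type*} [Fintype α] [PartialOrder α]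
    (ρ : α → ℕ) (ζ : α → α → ℚ) (hq : IsQuasiGraded ρ ζ)
    (m : α → α → ℚ) (hm₁ : iaMul ζ m = iaDelta)
    (x z : α) (hxz : x < z) :
    abIndex ρ ζ x z =
      -(m x z • (av - bv) ^ (ρ z - ρ x - 1))
        - ∑ y ∈ Finset.univ.filter (fun y => x < y ∧ y < z),
            abIndex ρ ζ x y * av * (m y z • (av - bv) ^ (ρ z - ρ y - 1)) := by
  obtain ⟨hρ, hζ, -⟩ := hq
  have hshift (y : α) (hyz : y < z) :
      (m y z • (av - bv) ^ (ρ z - ρ y - 1)) * (av - bv) = rankTwist (av - bv) ρ m y z := by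
    rw [rankTwist, smul_mul_assoc, pow_sub_one_mul (by have := hρ hyz; omega)]
  refine mul_right_cancel₀ av_sub_bv_ne_zero ?_
  rw [abIndex_mul_av_sub_bv_eq ρ ζ hρ hζ hm₁ hxz, sub_mul, neg_mul, hshift x hxz,
    Finset.sum_mul]
  congr 1
  refine Finset.sum_congr rfl fun y hy => ?_
  rw [← hshift y (mem_filter.mp hy).2.2]
  simp only [mul_assoc]

/-- the dual recursion for the ab-index via `μ̄ = ζ̄⁻¹`:
`Ψ([x,z]) = -μ̄(x,z)(a-b)^{ρ(x,z)-1} - ∑_{x<y<z} Ψ([x,y])·a·μ̄(y,z)(a-b)^{ρ(y,z)-1}`. -/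
theorem abIndex_dual_recursion {α : Type*} [Fintype α] [PartialOrder α] [BoundedOrder α]
    (ρ : α → ℕ) (ζ : α → α → ℚ) (hq : IsQuasiGraded ρ ζ)
    (m : α → α → ℚ) (hm₁ : iaMul ζ m = iaDelta) (hm₂ : iaMul m ζ = iaDelta)
    (x z : α) (hxz : x < z) :
    abIndex ρ ζ x z =
      -(m x z • (av - bv) ^ (ρ z - ρ x - 1))
        - ∑ y ∈ Finset.univ.filter (fun y => x < y ∧ y < z),
            abIndex ρ ζ x y * av * (m y z • (av - bv) ^ (ρ z - ρ y - 1)) :=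
  abIndex_dual_recursion_general ρ ζ hq m hm₁ x z hxz
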